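/- arXiv:1809.05155 — 5 statements merged into one kernel-verified Lean document; each statement's English description precedes it below -/
import Mathlib

section
/- Let X be a set with an involution τ : X → X and let ξ : X → U(2) be a map. Define Θ : X×ℂ² → X×ℂ² by Θ(x, v) = (τ(x), ξ(x)·Q·conj(v)). Then Θ covers τ and is antilinear on each fiber, i.e. Θ(x, λv) = (τ(x), conj(λ)·ξ(x)·Q·conj(v)) for all λ ∈ ℂ; and Θ∘Θ(x, v) = (x, −v) holds for all (x, v) ∈ X×ℂ², i.e. Θ is a 'Quaternionic' structure on the product bundle X×ℂ², if and only if ξ(τ(x)) = −Q·conj(ξ(x))⁻¹·Q for all x ∈ X. Moreover, when ξ takes values in SU(2), this last condition is equivalent to ξ(τ(x)) = ξ(x)⁻¹ for all x ∈ X. -/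
/-- The matrix `Q = [[0, -1], [1, 0]]`. -/
def Q : Matrix (Fin 2) (Fin 2) ℂ := !![0, -1; 1, 0]

open Matrix in
private theorem aux_unitary (U : Matrix (Fin 2) (Fin 2) ℂ)
    (h : U ∈ Matrix.unitaryGroup (Fin 2) ℂ) :
    Uᵀ * U.map (starRingEnd ℂ) = 1 ∧ U.map (starRingEnd ℂ) * Uᵀ = 1 := by
  have h1 : Uᴴ * U = 1 := by rw [← Matrix.star_eq_conjTranspose]; exact h.1
  have h2 : U * Uᴴ = 1 := by rw [← Matrix.star_eq_conjTranspose]; exact h.2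
  have hmap : Uᴴ.map (starRingEnd ℂ) = Uᵀ := by
    ext i j; simp [Matrix.conjTranspose_apply]
  have hone : (1 : Matrix (Fin 2) (Fin 2) ℂ).map (starRingEnd ℂ) = 1 :=
    Matrix.map_one _ (_root_.map_zero _) (_root_.map_one _)
  have e1 := congrArg (fun M => Matrix.map M (starRingEnd ℂ)) h1
  have e2 := congrArg (fun M => Matrix.map M (starRingEnd ℂ)) h2
  simp only [Matrix.map_mul, hmap, hone] at e1 e2
  exact ⟨e1, e2⟩

private theorem QQ : Q * Q = -1 := by
  ext i j; fin_cases i <;> fin_cases j <;>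
    simp [Q, Matrix.mul_apply, Fin.sum_univ_two, Matrix.one_apply]

private theorem Qconj : Q.map (starRingEnd ℂ) = Q := by
  ext i j; fin_cases i <;> fin_cases j <;> simp [Q]

private theorem conj_mulVec (M : Matrix (Fin 2) (Fin 2) ℂ) (w : Fin 2 → ℂ) :
    (fun i => starRingEnd ℂ (M.mulVec w i)) =
      (M.map (starRingEnd ℂ)).mulVec (fun i => starRingEnd ℂ (w i)) := by
  funext i
  simp [Matrix.mulVec, dotProduct, map_sum, Matrix.map_apply]

private theorem mulVec_eq_neg_iff (M : Matrix (Fin 2) (Fin 2) ℂ) :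
    (∀ v : Fin 2 → ℂ, M.mulVec v = -v) ↔ M = -1 := by
  constructor
  · intro h; ext i j
    have := congrFun (h (Pi.single j 1)) i
    simpa [Matrix.mulVec_single, Matrix.one_apply, Pi.single_apply] using this
  · intro h v; rw [h, Matrix.neg_mulVec, Matrix.one_mulVec]

open Matrix in
private theorem key_iff (U V : Matrix (Fin 2) (Fin 2) ℂ)
    (hU : U ∈ Matrix.unitaryGroup (Fin 2) ℂ) :
    (V * Q) * ((U * Q).map (starRingEnd ℂ)) = -1 ↔
      V = -(Q * (U.map (starRingEnd ℂ))⁻¹ * Q) := by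
  obtain ⟨h1, h2⟩ := aux_unitary U hU
  have hinv : (U.map (starRingEnd ℂ))⁻¹ = Uᵀ := Matrix.inv_eq_left_inv h1
  rw [hinv]
  set C := U.map (starRingEnd ℂ) with hC
  have hUQ : (U * Q).map (starRingEnd ℂ) = C * Q := by
    rw [Matrix.map_mul, Qconj]
  rw [hUQ]
  have hQQ' : ∀ M : Matrix (Fin 2) (Fin 2) ℂ, Q * (Q * M) = -M := by
    intro M; rw [← mul_assoc, QQ, neg_one_mul]
  have hBA : (-(Q * (Uᵀ * Q))) * (Q * (C * Q)) = -1 := by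
    have e : Q * (Uᵀ * (Q * (Q * (C * Q)))) = 1 := by
      rw [hQQ', mul_neg, mul_neg, ← mul_assoc Uᵀ, h1, one_mul, QQ, neg_neg]
    calc (-(Q * (Uᵀ * Q))) * (Q * (C * Q))
        = -(Q * (Uᵀ * (Q * (Q * (C * Q))))) := by simp only [neg_mul, mul_assoc]
      _ = -1 := by rw [e]
  have hQunit : IsUnit Q :=
    ⟨⟨Q, -Q, by rw [mul_neg, QQ, neg_neg], by rw [neg_mul, QQ, neg_neg]⟩, rfl⟩
  have hCunit : IsUnit C := ⟨⟨C, Uᵀ, h2, h1⟩, rfl⟩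
  have hAunit : IsUnit (Q * (C * Q)) := hQunit.mul (hCunit.mul hQunit)
  constructor
  · intro hV
    have hV' : V * (Q * (C * Q)) = -1 := by rw [← mul_assoc]; exact hV
    have := hAunit.mul_right_cancel (hV'.trans hBA.symm)
    rw [this, mul_assoc]
  · intro hV
    rw [hV]
    simpa only [neg_mul, mul_assoc] using hBA

open Matrix in
private theorem su_eq (U : Matrix (Fin 2) (Fin 2) ℂ)
    (hU : U ∈ Matrix.specialUnitaryGroup (Fin 2) ℂ) :
    -(Q * (U.map (starRingEnd ℂ))⁻¹ * Q) = U⁻¹ := by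
  obtain ⟨hU1, hdet⟩ := Matrix.mem_specialUnitaryGroup_iff.mp hU
  obtain ⟨h1, _⟩ := aux_unitary U hU1
  have hinv : (U.map (starRingEnd ℂ))⁻¹ = Uᵀ := Matrix.inv_eq_left_inv h1
  have hadj : U⁻¹ = U.adjugate := by
    rw [Matrix.inv_def, hdet, Ring.inverse_one, one_smul]
  rw [hinv, hadj, Matrix.adjugate_fin_two]
  ext i j; fin_cases i <;> fin_cases j <;>
    simp [Q, Matrix.mul_apply, Matrix.vecMul, dotProduct,
      Matrix.transpose_apply, Fin.sum_univ_two]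

/-- Given an involution `τ` on a set `X` and a map `ξ : X → U(2)`, the map
`Θ(x, v) = (τ x, ξ x · Q · conj v)` on the product bundle `X × ℂ²` covers `τ`, is antilinear
on each fiber, and satisfies `Θ∘Θ(x,v) = (x, -v)` — i.e. it is a "Quaternionic" structure —
if and only if `ξ(τ x) = -Q·conj(ξ x)⁻¹·Q` for all `x`.  Moreover, when `ξ` takes values in
`SU(2)`, this last condition is equivalent to `ξ(τ x) = (ξ x)⁻¹` for all `x`. -/
theorem quaternionic_structure_iff_equivariant (X : Type*) (τ : X → X)
    (hτ : Function.Involutive τ)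
    (ξ : X → Matrix (Fin 2) (Fin 2) ℂ)
    (hξ : ∀ x, ξ x ∈ Matrix.unitaryGroup (Fin 2) ℂ) :
    let Θ : X × (Fin 2 → ℂ) → X × (Fin 2 → ℂ) :=
      fun p => (τ p.1, (ξ p.1 * Q).mulVec fun i => starRingEnd ℂ (p.2 i))
    (∀ p : X × (Fin 2 → ℂ), (Θ p).1 = τ p.1) ∧
    (∀ (x : X) (v : Fin 2 → ℂ) (c : ℂ),
      Θ (x, c • v) = ((Θ (x, v)).1, starRingEnd ℂ c • (Θ (x, v)).2)) ∧
    ((∀ p : X × (Fin 2 → ℂ), Θ (Θ p) = (p.1, -p.2)) ↔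
      (∀ x, ξ (τ x) = -(Q * ((ξ x).map (starRingEnd ℂ))⁻¹ * Q))) ∧
    ((∀ x, ξ x ∈ Matrix.specialUnitaryGroup (Fin 2) ℂ) →
      ((∀ x, ξ (τ x) = -(Q * ((ξ x).map (starRingEnd ℂ))⁻¹ * Q)) ↔
        (∀ x, ξ (τ x) = (ξ x)⁻¹))) := by
  intro Θ
  have hcomp : ∀ (x : X) (v : Fin 2 → ℂ), (Θ (Θ (x, v))).2 =
      ((ξ (τ x) * Q) * ((ξ x * Q).map (starRingEnd ℂ))).mulVec v := by
    intro x v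
    show (ξ (τ x) * Q).mulVec
      (fun i => starRingEnd ℂ ((ξ x * Q).mulVec (fun i => starRingEnd ℂ (v i)) i)) = _
    rw [conj_mulVec]
    have hvv : (fun i => starRingEnd ℂ (starRingEnd ℂ (v i))) = v := by
      funext i; simp
    rw [hvv, Matrix.mulVec_mulVec]
  refine ⟨fun p => rfl, ?_, ?_, ?_⟩
  · intro x v c
    refine Prod.ext rfl ?_
    show (ξ x * Q).mulVec (fun i => starRingEnd ℂ ((c • v) i)) =
      starRingEnd ℂ c • (ξ x * Q).mulVec (fun i => starRingEnd ℂ (v i))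
    have : (fun i => starRingEnd ℂ ((c • v) i)) =
        starRingEnd ℂ c • fun i => starRingEnd ℂ (v i) := by
      funext i; simp
    rw [this, Matrix.mulVec_smul]
  · constructor
    · intro h x
      rw [← key_iff (ξ x) (ξ (τ x)) (hξ x)]
      apply (mulVec_eq_neg_iff _).mp
      intro v
      rw [← hcomp x v]
      exact congrArg Prod.snd (h (x, v))
    · intro h p
      obtain ⟨x, v⟩ := p
      have hm : (ξ (τ x) * Q) * ((ξ x * Q).map (starRingEnd ℂ)) = -1 :=
        (key_iff (ξ x) (ξ (τ x)) (hξ x)).mpr (h x)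
      refine Prod.ext (hτ x) ?_
      show (Θ (Θ (x, v))).2 = -v
      rw [hcomp x v, hm, Matrix.neg_mulVec, Matrix.one_mulVec]
  · intro hSU
    have e : ∀ x, -(Q * ((ξ x).map (starRingEnd ℂ))⁻¹ * Q) = (ξ x)⁻¹ :=
      fun x => su_eq _ (hSU x)
    constructor
    · intro h x; rw [h x, e x]
    · intro h x; rw [h x, ← e x]
end

section
/- Let X be a set with an involution τ : X → X. Suppose ψ : X → U(2) satisfies det(ψ(τ(x))) = conj(det(ψ(x))) for all x ∈ X, and ξ : X → SU(2) satisfies ξ(τ(x)) = ξ(x)⁻¹ for all x ∈ X. Then the map G_ψ(ξ)(x) := −ψ(τ(x))⁻¹·ξ(x)·Q·conj(ψ(x))·Q takes values in SU(2) (i.e. det(G_ψ(ξ)(x)) = 1 for all x) and satisfies G_ψ(ξ)(τ(x)) = G_ψ(ξ)(x)⁻¹ for all x ∈ X. Conversely, if ψ : X → U(2) is such that G_ψ(ξ) takes values in SU(2) for the constant map ξ ≡ 1, then det(ψ(τ(x))) = conj(det(ψ(x))) for all x ∈ X. -/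
/-- The gauge action `G_ψ(ξ)(x) := -ψ(τ x)⁻¹ · ξ(x) · Q · conj(ψ(x)) · Q`. -/
noncomputable def Gact {X : Type*} (τ : X → X) (ψ ξ : X → Matrix (Fin 2) (Fin 2) ℂ) :
    X → Matrix (Fin 2) (Fin 2) ℂ :=
  fun x => -((ψ (τ x))⁻¹ * ξ x * Q * ((ψ x).map (starRingEnd ℂ)) * Q)

/-!
For a unitary `2 × 2` matrix `A`, conjugating `conj A` by `Q` gives `-adj(Aᴴ) = -conj(det A) • A`.
Hence `G_ψ(ξ)(x) = conj(det ψ(x)) • ψ(τ x)ᴴ ξ(x) ψ(x)` is unitary, with determinant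
`conj(det ψ(x) · det ψ(τ x)) · det ξ(x)`; this is `1` exactly when `det ψ(τ x) = conj(det ψ(x))`.
Under that condition and `ξ(τ x) = ξ(x)ᴴ`, the formula for `G_ψ(ξ)(τ x)` is the conjugate
transpose of the one for `G_ψ(ξ)(x)`, i.e. its inverse.
-/

open Matrix

namespace Matrix

variable {n α : Type*} [Fintype n] [DecidableEq n] [CommRing α] [StarRing α] {A : Matrix n n α}

theorem inv_eq_star_of_mem_unitaryGroup (hA : A ∈ unitaryGroup n α) : A⁻¹ = star A :=
  inv_eq_left_inv hA.1

theorem adjugate_conjTranspose_of_mem_unitaryGroup (hA : A ∈ unitaryGroup n α) :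
    adjugate Aᴴ = star A.det • A := by
  calc adjugate Aᴴ = A * Aᴴ * adjugate Aᴴ := by rw [← star_eq_conjTranspose, hA.2, one_mul]
    _ = star A.det • A := by
      rw [mul_assoc, mul_adjugate, Matrix.mul_smul, mul_one, det_conjTranspose]

end Matrix

theorem Q_mul_map_conj_mul_Q (A : Matrix (Fin 2) (Fin 2) ℂ) :
    Q * A.map (starRingEnd ℂ) * Q = -adjugate Aᴴ := by
  ext i j
  fin_cases i <;> fin_cases j <;>
    simp [Q, mul_apply, vecMul, dotProduct, Fin.sum_univ_two, adjugate_fin_two,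
      conjTranspose_apply]

section Gact

variable {X : Type*} {τ : X → X} {ψ ξ : X → Matrix (Fin 2) (Fin 2) ℂ} {x : X}

theorem Gact_apply_of_mem_unitaryGroup (hψ : ψ x ∈ unitaryGroup (Fin 2) ℂ)
    (hψτ : ψ (τ x) ∈ unitaryGroup (Fin 2) ℂ) :
    Gact τ ψ ξ x = star (ψ x).det • (star (ψ (τ x)) * ξ x * ψ x) := by
  rw [Gact, mul_assoc _ Q, mul_assoc _ (Q * _), Q_mul_map_conj_mul_Q,
    adjugate_conjTranspose_of_mem_unitaryGroup hψ, inv_eq_star_of_mem_unitaryGroup hψτ,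
    mul_neg, neg_neg, Matrix.mul_smul, mul_assoc]

theorem Gact_mem_unitaryGroup (hψ : ψ x ∈ unitaryGroup (Fin 2) ℂ)
    (hψτ : ψ (τ x) ∈ unitaryGroup (Fin 2) ℂ) (hξ : ξ x ∈ unitaryGroup (Fin 2) ℂ) :
    Gact τ ψ ξ x ∈ unitaryGroup (Fin 2) ℂ := by
  rw [Gact_apply_of_mem_unitaryGroup hψ hψτ]
  exact Unitary.smul_mem_of_mem (Unitary.star_mem (det_of_mem_unitary hψ))
    (mul_mem (mul_mem (Unitary.star_mem hψτ) hξ) hψ)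

theorem det_Gact (hψ : ψ x ∈ unitaryGroup (Fin 2) ℂ) (hψτ : ψ (τ x) ∈ unitaryGroup (Fin 2) ℂ) :
    (Gact τ ψ ξ x).det = star ((ψ x).det * (ψ (τ x)).det) * (ξ x).det := by
  have hdet : star (ψ x).det * (ψ x).det = 1 :=
    Unitary.star_mul_self_of_mem (det_of_mem_unitary hψ)
  rw [Gact_apply_of_mem_unitaryGroup hψ hψτ, det_smul, det_mul, det_mul, star_eq_conjTranspose,
    det_conjTranspose, Fintype.card_fin, star_mul]
  linear_combination star (ψ x).det * star (ψ (τ x)).det * (ξ x).det * hdet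

theorem det_Gact_eq_one_iff (hψ : ψ x ∈ unitaryGroup (Fin 2) ℂ)
    (hψτ : ψ (τ x) ∈ unitaryGroup (Fin 2) ℂ) (hξ : (ξ x).det = 1) :
    (Gact τ ψ ξ x).det = 1 ↔ (ψ (τ x)).det = star (ψ x).det := by
  have hdet : star (ψ x).det * (ψ x).det = 1 :=
    Unitary.star_mul_self_of_mem (det_of_mem_unitary hψ)
  rw [det_Gact hψ hψτ, hξ, mul_one, star_eq_iff_star_eq, star_one, eq_comm]
  constructor
  · intro h
    linear_combination star (ψ x).det * h - (ψ (τ x)).det * hdet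
  · intro h
    rw [h, mul_comm, hdet]

theorem Gact_apply_eq_star_Gact_apply (hτ : τ (τ x) = x) (hψ : ψ x ∈ unitaryGroup (Fin 2) ℂ)
    (hψτ : ψ (τ x) ∈ unitaryGroup (Fin 2) ℂ) (hdet : (ψ (τ x)).det = star (ψ x).det)
    (hξ : ξ x ∈ unitaryGroup (Fin 2) ℂ) (hξτ : ξ (τ x) = (ξ x)⁻¹) :
    Gact τ ψ ξ (τ x) = star (Gact τ ψ ξ x) := by
  rw [Gact_apply_of_mem_unitaryGroup hψτ (hτ.symm ▸ hψ), Gact_apply_of_mem_unitaryGroup hψ hψτ,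
    hτ, hξτ, hdet, inv_eq_star_of_mem_unitaryGroup hξ]
  simp only [star_smul, star_mul, star_star, mul_assoc]

end Gact

/-- If `ψ : X → U(2)` satisfies `det(ψ(τ x)) = conj(det(ψ x))` and `ξ : X → SU(2)` satisfies
`ξ(τ x) = (ξ x)⁻¹`, then `G_ψ(ξ)` takes values in `SU(2)` and satisfies
`G_ψ(ξ)(τ x) = (G_ψ(ξ)(x))⁻¹`.  Conversely, if `G_ψ(ξ)` takes values in `SU(2)` for the
constant map `ξ ≡ 1`, then `det(ψ(τ x)) = conj(det(ψ x))` for all `x`. -/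
theorem Gact_preserves_equivariant_SU2 (X : Type*) (τ : X → X)
    (hτ : Function.Involutive τ) :
    (∀ ψ ξ : X → Matrix (Fin 2) (Fin 2) ℂ,
      (∀ x, ψ x ∈ Matrix.unitaryGroup (Fin 2) ℂ) →
      (∀ x, (ψ (τ x)).det = starRingEnd ℂ ((ψ x).det)) →
      (∀ x, ξ x ∈ Matrix.specialUnitaryGroup (Fin 2) ℂ) →
      (∀ x, ξ (τ x) = (ξ x)⁻¹) →
      (∀ x, Gact τ ψ ξ x ∈ Matrix.specialUnitaryGroup (Fin 2) ℂ) ∧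
      (∀ x, Gact τ ψ ξ (τ x) = (Gact τ ψ ξ x)⁻¹)) ∧
    (∀ ψ : X → Matrix (Fin 2) (Fin 2) ℂ,
      (∀ x, ψ x ∈ Matrix.unitaryGroup (Fin 2) ℂ) →
      (∀ x, Gact τ ψ (fun _ => (1 : Matrix (Fin 2) (Fin 2) ℂ)) x ∈
        Matrix.specialUnitaryGroup (Fin 2) ℂ) →
      ∀ x, (ψ (τ x)).det = starRingEnd ℂ ((ψ x).det)) := by
  simp only [mem_specialUnitaryGroup_iff]
  refine ⟨fun ψ ξ hψ hdet hξ hξτ => ?_, fun ψ hψ hG x => ?_⟩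
  · have hGU : ∀ x, Gact τ ψ ξ x ∈ unitaryGroup (Fin 2) ℂ := fun x =>
      Gact_mem_unitaryGroup (hψ x) (hψ (τ x)) (hξ x).1
    refine ⟨fun x => ⟨hGU x, ?_⟩, fun x => ?_⟩
    · exact (det_Gact_eq_one_iff (hψ x) (hψ (τ x)) (hξ x).2).2 (hdet x)
    · rw [inv_eq_star_of_mem_unitaryGroup (hGU x)]
      exact Gact_apply_eq_star_Gact_apply (hτ x) (hψ x) (hψ (τ x)) (hdet x) (hξ x).1 (hξτ x)
  · exact (det_Gact_eq_one_iff (hψ x) (hψ (τ x)) det_one).1 (hG x).2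
end

section
/- Let D := {z ∈ ℂ : |z| ≤ 1} be the closed unit disk and define, for z ∈ D, ξ_D(z) := (2(|z|²−|z|)+1)⁻¹ · [[2|z|−1, −2·conj(z)·(|z|−1)], [2z(|z|−1), 2|z|−1]]. Then: (i) 2(|z|²−|z|)+1 ≥ 1/2 > 0 for all z ∈ D, so ξ_D is well defined; (ii) ξ_D is continuous on D; (iii) ξ_D(z) ∈ SU(2) for every z ∈ D; (iv) ξ_D(−z) = ξ_D(z)⁻¹ for every z ∈ D, i.e. ξ_D is equivariant for the involution z ↦ −z; (v) ξ_D(0) = −1 (minus the identity matrix) and ξ_D(z) = 1 (the identity matrix) whenever |z| = 1. -/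
/-!
Write `r = ‖z‖` and `d = 2(r² - r) + 1`. Then `ξ_D(z)` is the Cayley–Klein matrix
`[[α, -conj β], [β, conj α]]` with `α = (2r - 1)/d` real and `β = 2(r - 1) z / d`. Such a matrix
lies in `SU(2)` exactly when `|α|² + |β|² = 1`, which here is the polynomial identity
`(2r - 1)² + 4r²(r - 1)² = d²`. Its adjoint is the Cayley–Klein matrix of `(conj α, -β)`, and since
`α` is real this is `ξ_D(-z)`; unitarity turns the adjoint into the inverse.
-/

open Complex

/-- The explicit equivariant map `ξ_D` on the closed unit disk:
`ξ_D(z) = (2(|z|²−|z|)+1)⁻¹ · [[2|z|−1, −2·conj(z)·(|z|−1)], [2z(|z|−1), 2|z|−1]]`. -/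
noncomputable def xiD (z : ℂ) : Matrix (Fin 2) (Fin 2) ℂ :=
  ((2 * (((‖z‖ : ℂ)) ^ 2 - (‖z‖ : ℂ)) + 1)⁻¹) •
    !![2 * (‖z‖ : ℂ) - 1, -2 * (starRingEnd ℂ z) * ((‖z‖ : ℂ) - 1);
       2 * z * ((‖z‖ : ℂ) - 1), 2 * (‖z‖ : ℂ) - 1]

open Matrix ComplexConjugate

def cayleyKlein (α β : ℂ) : Matrix (Fin 2) (Fin 2) ℂ :=
  !![α, -conj β; β, conj α]

theorem star_cayleyKlein (α β : ℂ) :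
    star (cayleyKlein α β) = cayleyKlein (conj α) (-β) := by
  ext i j
  fin_cases i <;> fin_cases j <;> simp [cayleyKlein]

theorem cayleyKlein_mul_star (α β : ℂ) :
    cayleyKlein α β * star (cayleyKlein α β) = ((‖α‖ : ℂ) ^ 2 + (‖β‖ : ℂ) ^ 2) • 1 := by
  rw [star_cayleyKlein]
  ext i j
  fin_cases i <;> fin_cases j <;>
    simp [cayleyKlein, mul_apply, Fin.sum_univ_two, mul_conj', conj_mul'] <;> ring

theorem det_cayleyKlein (α β : ℂ) : (cayleyKlein α β).det = (‖α‖ : ℂ) ^ 2 + (‖β‖ : ℂ) ^ 2 := by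
  simp [cayleyKlein, det_fin_two, mul_conj', conj_mul']

theorem cayleyKlein_mem_specialUnitaryGroup {α β : ℂ} (h : ‖α‖ ^ 2 + ‖β‖ ^ 2 = 1) :
    cayleyKlein α β ∈ specialUnitaryGroup (Fin 2) ℂ := by
  have h' : (‖α‖ : ℂ) ^ 2 + (‖β‖ : ℂ) ^ 2 = 1 := by exact_mod_cast h
  rw [mem_specialUnitaryGroup_iff, mem_unitaryGroup_iff, cayleyKlein_mul_star,
    det_cayleyKlein, h', one_smul]
  exact ⟨rfl, rfl⟩

theorem one_half_le_two_mul_sq_sub_add_one (r : ℝ) : (1 / 2 : ℝ) ≤ 2 * (r ^ 2 - r) + 1 := by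
  nlinarith [sq_nonneg (2 * r - 1)]

theorem two_mul_sq_sub_add_one_pos (r : ℝ) : 0 < 2 * (r ^ 2 - r) + 1 :=
  lt_of_lt_of_le one_half_pos (one_half_le_two_mul_sq_sub_add_one r)

theorem xiD_eq_cayleyKlein (z : ℂ) :
    xiD z = cayleyKlein ((2 * ‖z‖ - 1) / (2 * (‖z‖ ^ 2 - ‖z‖) + 1) : ℝ)
      (((2 * (‖z‖ - 1)) / (2 * (‖z‖ ^ 2 - ‖z‖) + 1) : ℝ) * z) := by
  ext i j
  fin_cases i <;> fin_cases j <;> simp [xiD, cayleyKlein, map_ofNat] <;> ring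

theorem norm_sq_add_norm_sq_xiD (z : ℂ) :
    ‖(((2 * ‖z‖ - 1) / (2 * (‖z‖ ^ 2 - ‖z‖) + 1) : ℝ) : ℂ)‖ ^ 2
      + ‖(((2 * (‖z‖ - 1)) / (2 * (‖z‖ ^ 2 - ‖z‖) + 1) : ℝ) : ℂ) * z‖ ^ 2 = 1 := by
  have hd := (two_mul_sq_sub_add_one_pos ‖z‖).ne'
  rw [norm_mul, mul_pow, norm_real, norm_real, Real.norm_eq_abs, Real.norm_eq_abs, sq_abs,
    sq_abs, div_pow, div_pow, div_mul_eq_mul_div, ← add_div,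
    div_eq_one_iff_eq (pow_ne_zero 2 hd)]
  ring

theorem xiD_mem_specialUnitaryGroup (z : ℂ) : xiD z ∈ specialUnitaryGroup (Fin 2) ℂ := by
  rw [xiD_eq_cayleyKlein]
  exact cayleyKlein_mem_specialUnitaryGroup (norm_sq_add_norm_sq_xiD z)

theorem xiD_neg (z : ℂ) : xiD (-z) = star (xiD z) := by
  rw [xiD_eq_cayleyKlein, xiD_eq_cayleyKlein, star_cayleyKlein, conj_ofReal, norm_neg]
  congr 1
  ring

theorem continuous_xiD : Continuous xiD := by
  unfold xiD
  fun_prop (disch := intro z; exact_mod_cast (two_mul_sq_sub_add_one_pos ‖z‖).ne')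

theorem xiD_neg_eq_inv (z : ℂ) : xiD (-z) = (xiD z)⁻¹ := by
  rw [xiD_neg, inv_eq_left_inv]
  exact mem_unitaryGroup_iff'.mp (xiD_mem_specialUnitaryGroup z).1

theorem xiD_zero : xiD 0 = -1 := by
  ext i j
  fin_cases i <;> fin_cases j <;> simp [xiD]

theorem xiD_of_norm_eq_one {z : ℂ} (hz : ‖z‖ = 1) : xiD z = 1 := by
  ext i j
  fin_cases i <;> fin_cases j <;> norm_num [xiD, hz]

/-- On the closed unit disk `D = {z : |z| ≤ 1}`:
(i) the denominator `2(|z|²−|z|)+1` is positive and `≥ 1/2`, so `ξ_D` is well defined;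
(ii) `ξ_D` is continuous on `D`;
(iii) `ξ_D(z) ∈ SU(2)` for every `z ∈ D`;
(iv) `ξ_D(−z) = ξ_D(z)⁻¹` for every `z ∈ D`;
(v) `ξ_D(0) = −1` and `ξ_D(z) = 1` whenever `|z| = 1`. -/
theorem xiD_properties :
    (∀ z : ℂ, ‖z‖ ≤ 1 →
      (0 : ℝ) < 2 * ((‖z‖) ^ 2 - ‖z‖) + 1 ∧
      (1 / 2 : ℝ) ≤ 2 * ((‖z‖) ^ 2 - ‖z‖) + 1) ∧
    ContinuousOn xiD {z : ℂ | ‖z‖ ≤ 1} ∧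
    (∀ z : ℂ, ‖z‖ ≤ 1 → xiD z ∈ Matrix.specialUnitaryGroup (Fin 2) ℂ) ∧
    (∀ z : ℂ, ‖z‖ ≤ 1 → xiD (-z) = (xiD z)⁻¹) ∧
    (xiD 0 = -1 ∧ ∀ z : ℂ, ‖z‖ = 1 → xiD z = 1) :=
  ⟨fun _ _ => ⟨two_mul_sq_sub_add_one_pos _, one_half_le_two_mul_sq_sub_add_one _⟩,
    continuous_xiD.continuousOn, fun z _ => xiD_mem_specialUnitaryGroup z,
    fun z _ => xiD_neg_eq_inv z, xiD_zero, fun _ => xiD_of_norm_eq_one⟩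
end

section
/- For x = (x₁,x₂,x₃) ∈ ℝ³ with x₁²+x₂²+x₃² = 1, define φ⋆(x) := i·[[x₁, −x₂+ix₃], [x₂+ix₃, x₁]]. Then: (i) φ⋆(x) is a unitary 2×2 matrix for every x in the unit sphere S² ⊂ ℝ³; (ii) det(φ⋆(x)) = −1 for every x ∈ S²; (iii) φ⋆ is equivariant for the antipodal involution x ↦ −x of S² and the involution u ↦ −Q·conj(u)·Q of U(2), namely φ⋆(−x) = −Q·conj(φ⋆(x))·Q for all x ∈ S². -/
/-- The map `φ⋆(x) = i·[[x₁, −x₂+ix₃], [x₂+ix₃, x₁]]` on the unit sphere `S² ⊂ ℝ³`. -/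
noncomputable def phiStar (x₁ x₂ x₃ : ℝ) : Matrix (Fin 2) (Fin 2) ℂ :=
  Complex.I • !![(x₁ : ℂ), -(x₂ : ℂ) + (x₃ : ℂ) * Complex.I;
                 (x₂ : ℂ) + (x₃ : ℂ) * Complex.I, (x₁ : ℂ)]

/-- For `x = (x₁,x₂,x₃)` in the unit sphere `S² ⊂ ℝ³`:
(i) `φ⋆(x)` is unitary; (ii) `det(φ⋆(x)) = −1`;
(iii) `φ⋆` is equivariant for the antipodal involution of `S²` and the involution
`u ↦ −Q·conj(u)·Q` of `U(2)`, i.e. `φ⋆(−x) = −Q·conj(φ⋆(x))·Q`. -/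
theorem phiStar_properties (x₁ x₂ x₃ : ℝ) (h : x₁ ^ 2 + x₂ ^ 2 + x₃ ^ 2 = 1) :
    phiStar x₁ x₂ x₃ ∈ Matrix.unitaryGroup (Fin 2) ℂ ∧
    (phiStar x₁ x₂ x₃).det = -1 ∧
    phiStar (-x₁) (-x₂) (-x₃) =
      -(Q * (phiStar x₁ x₂ x₃).map (starRingEnd ℂ) * Q) := by
  refine ⟨?_, ?_, ?_⟩
  · rw [Matrix.mem_unitaryGroup_iff]
    ext i j
    fin_cases i <;> fin_cases j <;>
      simp [phiStar, Matrix.mul_apply, Fin.sum_univ_succ, Matrix.star_apply,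
        Complex.ext_iff] <;> ring_nf <;>
      constructor <;> first | trivial | linarith
  · simp [phiStar, Matrix.det_fin_two, Matrix.smul_apply]
    have hC : (x₁:ℂ)^2 + (x₂:ℂ)^2 + (x₃:ℂ)^2 = 1 := by
      exact_mod_cast congrArg Complex.ofReal h
    ring_nf
    linear_combination ((x₁:ℂ)^2 + (x₂:ℂ)^2 + (1 - Complex.I^2)*(x₃:ℂ)^2) * Complex.I_sq - hC
  · ext i j
    fin_cases i <;> fin_cases j <;>
      simp [phiStar, Q, Matrix.mul_apply, Matrix.vecMul, dotProduct,
        Fin.sum_univ_succ, Complex.ext_iff]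
end

section
/- Let X be a Hausdorff topological space with a continuous involution τ : X → X whose fixed point set X^τ = {x₁, …, xₙ} is finite. Suppose that for each i = 1, …, n there is a topological embedding hᵢ : D → X of the closed unit disk D = {z ∈ ℂ : |z| ≤ 1} such that: the images Dᵢ := hᵢ(D) are pairwise disjoint; hᵢ(0) = xᵢ; hᵢ is equivariant, i.e. hᵢ(−z) = τ(hᵢ(z)) for all z ∈ D; and the topological frontier of Dᵢ in X is contained in hᵢ(∂D), the image of the unit circle. Then for every function ε : X^τ → {+1, −1} there exists a continuous map ξ_ε : X → SU(2) satisfying ξ_ε(τ(x)) = ξ_ε(x)⁻¹ for all x ∈ X and ξ_ε(xᵢ) = ε(xᵢ)·1 for every i = 1, …, n (where 1 is the 2×2 identity matrix). -/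
/-!
In each disk `Dᵢ` with `ε(xᵢ) = -1` implant the model map
`ξ_D(z) = !![-cos (π‖z‖), i·conj w; i·w, -cos (π‖z‖)]` with `w = sin (π‖z‖) · z / ‖z‖`,
a unit quaternion sweeping from `-1` at the center to `1` on the boundary circle; since
`ξ_D(-z)` is the conjugate transpose, i.e. the inverse, of `ξ_D(z)`, the map is equivariant.
Outside these disks put `ξ_ε = 1`. Continuity across the boundaries holds because each `Dᵢ`
is closed (its frontier lies in `Dᵢ`) and every point of the closure of the complement of the
disks lying in `Dᵢ` is on the frontier of `Dᵢ`, hence on its boundary circle, where `ξ_D = 1`.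
-/

open Set Function Topology Real Matrix ComplexConjugate

noncomputable section

def su2Matrix (a : ℝ) (w : ℂ) : Matrix (Fin 2) (Fin 2) ℂ :=
  !![(a : ℂ), Complex.I * conj w; Complex.I * w, (a : ℂ)]

section su2Matrix

variable {a : ℝ} {w : ℂ}

lemma star_su2Matrix (a : ℝ) (w : ℂ) : star (su2Matrix a w) = su2Matrix a (-w) := by
  ext i j
  fin_cases i <;> fin_cases j <;> simp [su2Matrix]

lemma su2Matrix_neg_mul (h : a ^ 2 + Complex.normSq w = 1) :
    su2Matrix a (-w) * su2Matrix a w = 1 := by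
  have key : (a : ℂ) ^ 2 + conj w * w = 1 := by
    rw [mul_comm, Complex.mul_conj]; exact_mod_cast h
  rw [su2Matrix, su2Matrix, mul_fin_two, one_fin_two]
  ext i j
  fin_cases i <;> fin_cases j <;> simp <;>
    first | linear_combination key - conj w * w * Complex.I_sq | ring

lemma su2Matrix_mem_specialUnitaryGroup (h : a ^ 2 + Complex.normSq w = 1) :
    su2Matrix a w ∈ specialUnitaryGroup (Fin 2) ℂ := by
  refine mem_specialUnitaryGroup_iff.mpr ⟨?_, ?_⟩
  · rw [mem_unitaryGroup_iff', star_su2Matrix, su2Matrix_neg_mul h]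
  · have key : (a : ℂ) ^ 2 + conj w * w = 1 := by
      rw [mul_comm, Complex.mul_conj]; exact_mod_cast h
    rw [su2Matrix, det_fin_two_of]
    linear_combination key - conj w * w * Complex.I_sq

lemma su2Matrix_zero (a : ℝ) : su2Matrix a 0 = (a : ℂ) • 1 := by
  ext i j
  fin_cases i <;> fin_cases j <;> simp [su2Matrix]

end su2Matrix

lemma Real.sinc_mul_self (x : ℝ) : sinc x * x = sin x := by
  rcases eq_or_ne x 0 with rfl | hx
  · simp
  · rw [sinc_of_ne_zero hx, div_mul_cancel₀ _ hx]

-- `π · sinc (π‖z‖) · z = sin (π‖z‖) · z / ‖z‖`, written with `sinc` to be visibly continuous at `0`.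
def diskModel (z : ℂ) : Matrix (Fin 2) (Fin 2) ℂ :=
  su2Matrix (-cos (π * ‖z‖)) (((π * sinc (π * ‖z‖) : ℝ) : ℂ) * z)

lemma diskModel_pythagoras (z : ℂ) :
    (-cos (π * ‖z‖)) ^ 2 + Complex.normSq (((π * sinc (π * ‖z‖) : ℝ) : ℂ) * z) = 1 := by
  rw [Complex.normSq_mul, Complex.normSq_ofReal, Complex.normSq_eq_norm_sq, neg_sq,
    ← sin_sq_add_cos_sq (π * ‖z‖), ← sinc_mul_self]
  ring

lemma continuous_diskModel : Continuous diskModel := by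
  have := continuous_sinc
  unfold diskModel su2Matrix
  fun_prop

lemma diskModel_mem_specialUnitaryGroup (z : ℂ) :
    diskModel z ∈ specialUnitaryGroup (Fin 2) ℂ :=
  su2Matrix_mem_specialUnitaryGroup (diskModel_pythagoras z)

lemma diskModel_neg (z : ℂ) : diskModel (-z) = (diskModel z)⁻¹ := by
  refine (inv_eq_left_inv ?_).symm
  rw [diskModel, diskModel, norm_neg, mul_neg]
  exact su2Matrix_neg_mul (diskModel_pythagoras z)

lemma diskModel_of_norm_eq_one {z : ℂ} (hz : ‖z‖ = 1) : diskModel z = 1 := by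
  rw [diskModel, hz, mul_one, cos_pi, sinc_of_ne_zero pi_ne_zero, sin_pi]
  simp [su2Matrix_zero]

lemma diskModel_zero : diskModel 0 = -1 := by
  simp [diskModel, su2Matrix_zero]

section Implant

variable {X Y ι : Type*}

theorem continuous_of_continuousOn_of_eqOn_frontier [TopologicalSpace X] [TopologicalSpace Y]
    [Finite ι] {s : ι → Set X} {F : X → Y} {c : Y} (hs : ∀ i, IsClosed (s i)) (hF : ∀ i, ContinuousOn F (s i))
    (hfr : ∀ i, EqOn F (fun _ => c) (frontier (s i)))
    (hout : EqOn F (fun _ => c) (⋃ i, s i)ᶜ) : Continuous F := by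
  let S : Option ι → Set X := fun o => o.elim (closure (⋃ i, s i)ᶜ) s
  refine (locallyFinite_of_finite S).continuous ?_ ?_ ?_
  · refine eq_univ_of_forall fun x => ?_
    by_cases hx : x ∈ ⋃ i, s i
    · obtain ⟨i, hi⟩ := mem_iUnion.mp hx
      exact mem_iUnion.mpr ⟨some i, hi⟩
    · exact mem_iUnion.mpr ⟨none, subset_closure hx⟩
  · rintro (_ | i)
    exacts [isClosed_closure, hs i]
  · rintro (_ | i)
    · refine (continuousOn_const (c := c)).congr fun x hx => ?_
      by_cases hxs : x ∈ ⋃ i, s i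
      · obtain ⟨i, hi⟩ := mem_iUnion.mp hxs
        refine hfr i ⟨subset_closure hi, fun hint => ?_⟩
        simp only [S, Option.elim, closure_compl] at hx
        exact hx (interior_mono (subset_iUnion s i) hint)
      · exact hout hxs
    · exact hF i

open Classical in
def implant (s : ι → Set X) (f : ι → X → Y) (c : Y) (x : X) : Y :=
  if hx : ∃ i, x ∈ s i then f hx.choose x else c

variable {s : ι → Set X} {f : ι → X → Y} {c : Y}

lemma implant_of_mem (hs : Pairwise (Disjoint on s)) {i : ι} {x : X} (hx : x ∈ s i) :
    implant s f c x = f i x := by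
  have hex : ∃ j, x ∈ s j := ⟨i, hx⟩
  have hi : hex.choose = i :=
    of_not_not fun hne => Set.disjoint_left.mp (hs hne) hex.choose_spec hx
  rw [implant, dif_pos hex, hi]

lemma implant_of_notMem {x : X} (hx : ∀ i, x ∉ s i) : implant s f c x = c :=
  dif_neg (not_exists.mpr hx)

lemma implant_mem {M : Set Y} (hc : c ∈ M) (hf : ∀ i, ∀ x ∈ s i, f i x ∈ M) (x : X) :
    implant s f c x ∈ M := by
  unfold implant
  split_ifs with hx
  exacts [hf _ x hx.choose_spec, hc]

theorem continuous_implant [TopologicalSpace X] [TopologicalSpace Y] [Finite ι]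
    (hs : ∀ i, IsClosed (s i)) (hdisj : Pairwise (Disjoint on s)) (hf : ∀ i, ContinuousOn (f i) (s i))
    (hfr : ∀ i, EqOn (f i) (fun _ => c) (frontier (s i))) : Continuous (implant s f c) :=
  continuous_of_continuousOn_of_eqOn_frontier hs
    (fun i => (hf i).congr fun _ hx => implant_of_mem hdisj hx)
    (fun i x hx => (implant_of_mem hdisj ((hs i).frontier_subset hx)).trans (hfr i hx))
    (fun _ hx => implant_of_notMem (by simpa using hx))

theorem semiconj_implant (hdisj : Pairwise (Disjoint on s)) {τ : X → X} {σ : Y → Y}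
    (hτ : Involutive τ) (hτs : ∀ i, MapsTo τ (s i) (s i)) (hσ : σ c = c)
    (hf : ∀ i, ∀ x ∈ s i, f i (τ x) = σ (f i x)) : Semiconj (implant s f c) τ σ := by
  intro x
  by_cases hx : ∃ i, x ∈ s i
  · obtain ⟨i, hi⟩ := hx
    rw [implant_of_mem hdisj (hτs i hi), implant_of_mem hdisj hi, hf i x hi]
  · have hτx : ∀ i, τ x ∉ s i := fun i hi => hx ⟨i, hτ x ▸ hτs i hi⟩
    rw [implant_of_notMem hτx, implant_of_notMem (not_exists.mp hx), hσ]

end Implant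

theorem Topology.IsEmbedding.continuousOn_invFun {α X : Type*} [TopologicalSpace α]
    [TopologicalSpace X] [Nonempty α] {h : α → X} (hh : IsEmbedding h) :
    ContinuousOn (invFun h) (range h) :=
  hh.continuousOn_iff.mpr (continuousOn_id.congr fun _ hx => invFun_eq hx)

section EquivariantDisk

local notation "𝔻" => {z : ℂ // ‖z‖ ≤ 1}

instance : Nonempty 𝔻 := ⟨⟨0, by simp⟩⟩

variable {X : Type*} {τ : X → X} {h : 𝔻 → X}

lemma mapsTo_range_of_equivariant
    (hequiv : ∀ z : 𝔻, h ⟨-(z : ℂ), by simpa using z.2⟩ = τ (h z)) :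
    MapsTo τ (range h) (range h) := by
  rintro _ ⟨z, rfl⟩
  exact ⟨_, hequiv z⟩

def diskChart (h : 𝔻 → X) (x : X) : ℂ := (invFun h x : 𝔻)

lemma diskChart_apply (hinj : Injective h) (z : 𝔻) :
    diskChart h (h z) = z := by
  rw [diskChart, leftInverse_invFun hinj z]

lemma continuousOn_diskChart [TopologicalSpace X] (hemb : IsEmbedding h) :
    ContinuousOn (diskChart h) (range h) :=
  continuous_subtype_val.comp_continuousOn hemb.continuousOn_invFun

lemma norm_diskChart_of_mem_frontier [TopologicalSpace X] (hinj : Injective h)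
    (hfront : frontier (range h) ⊆ h '' {z : 𝔻 | ‖(z : ℂ)‖ = 1}) {x : X}
    (hx : x ∈ frontier (range h)) : ‖diskChart h x‖ = 1 := by
  obtain ⟨z, hz, rfl⟩ := hfront hx
  rwa [diskChart_apply hinj]

lemma diskChart_apply_involution (hinj : Injective h)
    (hequiv : ∀ z : 𝔻, h ⟨-(z : ℂ), by simpa using z.2⟩ = τ (h z)) :
    ∀ x ∈ range h, diskChart h (τ x) = -diskChart h x := by
  rintro _ ⟨z, rfl⟩
  rw [← hequiv, diskChart_apply hinj, diskChart_apply hinj]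

end EquivariantDisk

/-- Surjectivity part of Lemma 2.14: let `X` be a Hausdorff space with a continuous
involution `τ` whose fixed point set is the finite set `{xs 1, …, xs n}`.  Suppose each
fixed point `xs i` has an invariant embedded closed disk `Dᵢ = range (h i)` (the disks
being pairwise disjoint, centered at `xs i`, equivariant for `z ↦ -z`, and with frontier
contained in the image of the unit circle).  Then for every function
`ε : {x₁,…,xₙ} → {+1,−1}` there is a continuous map `ξ_ε : X → SU(2)` with
`ξ_ε(τ x) = (ξ_ε x)⁻¹` for all `x` and `ξ_ε(xᵢ) = ε(xᵢ)·1` for every `i`. -/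
theorem exists_equivariant_SU2_map_with_prescribed_signs
    (X : Type*) [TopologicalSpace X]
    (τ : X → X) (hτ : Function.Involutive τ)
    (n : ℕ) (xs : Fin n → X)
    (h : Fin n → {z : ℂ // ‖z‖ ≤ 1} → X)
    (hemb : ∀ i, Topology.IsEmbedding (h i))
    (hdisj : ∀ i j, i ≠ j → Disjoint (Set.range (h i)) (Set.range (h j)))
    (hcenter : ∀ i, h i ⟨0, by norm_num⟩ = xs i)
    (hequiv : ∀ i (z : {z : ℂ // ‖z‖ ≤ 1}),
      h i ⟨-(z : ℂ), by simpa using z.2⟩ = τ (h i z))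
    (hfront : ∀ i, frontier (Set.range (h i)) ⊆
      h i '' {z : {z : ℂ // ‖z‖ ≤ 1} | ‖(z : ℂ)‖ = 1}) :
    ∀ ε : Fin n → ℂ, (∀ i, ε i = 1 ∨ ε i = -1) →
      ∃ ξ : X → Matrix (Fin 2) (Fin 2) ℂ,
        Continuous ξ ∧
        (∀ x, ξ x ∈ Matrix.specialUnitaryGroup (Fin 2) ℂ) ∧
        (∀ x, ξ (τ x) = (ξ x)⁻¹) ∧
        (∀ i, ξ (xs i) = ε i • (1 : Matrix (Fin 2) (Fin 2) ℂ)) := by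
  intro ε hε
  let D : {i // ε i = -1} → Set X := fun i => range (h i)
  have hD : Pairwise (Disjoint on D) := fun i j hij => hdisj i j (Subtype.coe_ne_coe.mpr hij)
  have hD_closed : ∀ i, IsClosed (D i) := fun i =>
    frontier_subset_iff_isClosed.mp ((hfront i).trans (image_subset_range _ _))
  refine ⟨implant D (fun i => diskModel ∘ diskChart (h i)) 1,
    continuous_implant hD_closed hD
      (fun i => continuous_diskModel.comp_continuousOn (continuousOn_diskChart (hemb i)))
      (fun i x hx => diskModel_of_norm_eq_one
        (norm_diskChart_of_mem_frontier (hemb i).injective (hfront i) hx)),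
    implant_mem (one_mem _) fun _ _ _ => diskModel_mem_specialUnitaryGroup _,
    semiconj_implant hD hτ (fun i => mapsTo_range_of_equivariant (hequiv i)) inv_one
      (fun i x hx => by
        rw [Function.comp_apply, diskChart_apply_involution (hemb i).injective (hequiv i) x hx,
          diskModel_neg, Function.comp_apply]),
    fun i => ?_⟩
  rcases hε i with hi | hi
  · refine (implant_of_notMem fun j hj => ?_).trans (by rw [hi, one_smul])
    have hεji : ε j ≠ ε i := by rw [j.2, hi]; norm_num
    exact Set.disjoint_left.mp (hdisj i j fun hij => hεji (hij ▸ rfl)) ⟨_, hcenter i⟩ hj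
  · rw [implant_of_mem (i := ⟨i, hi⟩) hD ⟨_, hcenter i⟩, ← hcenter i, Function.comp_apply,
      diskChart_apply (hemb i).injective, hi, neg_one_smul]
    exact diskModel_zero
end
end
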